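/- arXiv:1705.01659 — 4 statements merged into one kernel-verified Lean document; each statement's English description precedes it below -/
import Mathlib

section
/- Let V be a finite-dimensional complex vector space with a finite descending filtration V = V^a ⊇ ⋯ ⊇ V^b = 0, and let □ : V → V be a filtration preserving linear map. Let P̃ : gr(V) → gr(V) denote the spectral projection of gr(□) onto the generalized zero eigenspace, and let P : V → V denote the spectral projection of □ onto the generalized zero eigenspace. Then P is filtration preserving with gr(P) = P̃, and P is the unique linear map Q : V → V satisfying: Q is filtration preserving, Q∘Q = Q, Q∘□ = □∘Q, and gr(Q) = P̃. Moreover V = im(P) ⊕ ker(P) as an internal direct sum, □ is nilpotent on im(P), and □ restricts to a bijection of ker(P). -/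
open DirectSum

/-- The `p`-th graded component `V^p/V^{p+1}` of a filtered vector space. -/
abbrev GrC {V : Type*} [AddCommGroup V] [Module ℂ V] (Vf : ℤ → Submodule ℂ V) (p : ℤ) :=
  (Vf p) ⧸ (Vf (p + 1)).comap (Vf p).subtype

/-- The map induced on the `p`-th graded component by a filtration preserving endomorphism. -/
noncomputable def grComponent {V : Type*} [AddCommGroup V] [Module ℂ V]
    (Vf : ℤ → Submodule ℂ V)
    (A : V →ₗ[ℂ] V) (hA : ∀ p : ℤ, ∀ v ∈ Vf p, A v ∈ Vf p) (p : ℤ) :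
    GrC Vf p →ₗ[ℂ] GrC Vf p :=
  Submodule.mapQ _ _ (A.restrict (hA p)) (fun v hv => by
    have : A (v : V) ∈ Vf (p + 1) := hA (p + 1) (v : V) (by simpa using hv)
    simpa [Submodule.mem_comap] using this)

/-- The map `gr(A) : gr(V) → gr(V)` induced on the associated graded vector space
`gr(V) = ⨁ₚ V^p/V^{p+1}` by a filtration preserving endomorphism `A`. -/
noncomputable def grMap {V : Type*} [AddCommGroup V] [Module ℂ V]
    (Vf : ℤ → Submodule ℂ V)
    (A : V →ₗ[ℂ] V) (hA : ∀ p : ℤ, ∀ v ∈ Vf p, A v ∈ Vf p) :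
    (⨁ p : ℤ, GrC Vf p) →ₗ[ℂ] ⨁ p : ℤ, GrC Vf p :=
  DirectSum.toModule ℂ ℤ _ fun p =>
    (DirectSum.lof ℂ ℤ (fun q => GrC Vf q) p) ∘ₗ grComponent Vf A hA p

/-- `P` is the spectral projection of `B` onto the generalized zero eigenspace, i.e. the projection
onto the generalized eigenspace for the eigenvalue `0` along the sum of the generalized eigenspaces
for the nonzero eigenvalues. -/
def IsGenZeroProj {V : Type*} [AddCommGroup V] [Module ℂ V] (B P : V →ₗ[ℂ] V) : Prop :=
  (∀ v ∈ Module.End.maxGenEigenspace B 0, P v = v) ∧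
  (∀ μ : ℂ, μ ≠ 0 → ∀ v ∈ Module.End.maxGenEigenspace B μ, P v = 0)

section Aux
variable {V : Type*} [AddCommGroup V] [Module ℂ V]

lemma pow_comm_apply {f g : V →ₗ[ℂ] V} (h : ∀ x, g (f x) = f (g x)) (k : ℕ) (x : V) :
    g ((f ^ k) x) = (f ^ k) (g x) := by
  induction k generalizing x with
  | zero => simp
  | succ k ih => rw [pow_succ, Module.End.mul_apply, Module.End.mul_apply, ih, h]

lemma mem_maxGen_zero_iff {B : V →ₗ[ℂ] V} {v : V} :
    v ∈ Module.End.maxGenEigenspace B 0 ↔ ∃ k : ℕ, (B ^ k) v = 0 := by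
  rw [Module.End.mem_maxGenEigenspace]
  simp

lemma genZeroProj_unique {B P1 P2 : V →ₗ[ℂ] V}
    (hsup : ⨆ μ, Module.End.maxGenEigenspace B μ = ⊤)
    (h1 : IsGenZeroProj B P1) (h2 : IsGenZeroProj B P2) : P1 = P2 := by
  ext v
  have hv : v ∈ ⨆ μ, Module.End.maxGenEigenspace B μ := hsup ▸ Submodule.mem_top
  refine Submodule.iSup_induction (motive := fun x => P1 x = P2 x) _ hv ?_ (by simp) ?_
  · intro μ x hx
    by_cases hμ : μ = 0
    · subst hμ; rw [h1.1 x hx, h2.1 x hx]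
    · rw [h1.2 μ hμ x hx, h2.2 μ hμ x hx]
  · intro x y hx hy; rw [map_add, map_add, hx, hy]

lemma isGenZeroProj_of {B Q : V →ₗ[ℂ] V} (hQ2 : Q ∘ₗ Q = Q) (hcomm : Q ∘ₗ B = B ∘ₗ Q)
    (hnil : ∃ N : ℕ, (B ^ N) ∘ₗ Q = 0)
    (hinj : ∀ w, Q w = 0 → B w = 0 → w = 0) : IsGenZeroProj B Q := by
  obtain ⟨N, hN⟩ := hnil
  have hQB : ∀ x, Q (B x) = B (Q x) := fun x => LinearMap.congr_fun hcomm x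
  have hQBk : ∀ (k : ℕ) (x : V), Q ((B ^ k) x) = (B ^ k) (Q x) := fun k x =>
    pow_comm_apply hQB k x
  have hker : ∀ (k : ℕ) (w : V), Q w = 0 → (B ^ k) w = 0 → w = 0 := by
    intro k
    induction k with
    | zero => intro w _ hw; simpa using hw
    | succ k ih =>
      intro w hQw hBw
      have h1 : Q (B w) = 0 := by rw [hQB, hQw, map_zero]
      have h2 : (B ^ k) (B w) = 0 := by
        rw [← Module.End.mul_apply, ← pow_succ]; exact hBw
      exact hinj w hQw (ih (B w) h1 h2)
  constructor
  · intro v hv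
    obtain ⟨k, hk⟩ := mem_maxGen_zero_iff.mp hv
    have hQw : Q (v - Q v) = 0 := by
      have := LinearMap.congr_fun hQ2 v
      simp only [LinearMap.comp_apply] at this
      rw [map_sub, this, sub_self]
    have hBw : (B ^ k) (v - Q v) = 0 := by
      rw [map_sub, hk, ← hQBk, hk, map_zero, sub_self]
    have := hker k (v - Q v) hQw hBw
    have := sub_eq_zero.mp this
    exact this.symm
  · intro μ hμ v hv
    rw [Module.End.mem_maxGenEigenspace] at hv
    obtain ⟨k, hk⟩ := hv
    have hQv0 : Q v ∈ Module.End.maxGenEigenspace B 0 := by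
      rw [mem_maxGen_zero_iff]
      refine ⟨N, ?_⟩
      have := LinearMap.congr_fun hN v
      simpa using this
    have hQvμ : Q v ∈ Module.End.maxGenEigenspace B μ := by
      rw [Module.End.mem_maxGenEigenspace]
      refine ⟨k, ?_⟩
      have hc : ∀ x, Q ((B - μ • 1) x) = (B - μ • 1) (Q x) := by
        intro x
        simp only [LinearMap.sub_apply, LinearMap.smul_apply, Module.End.one_apply, map_sub,
          map_smul, hQB]
      rw [← pow_comm_apply hc k v, hk, map_zero]
    have hdis : Disjoint (Module.End.maxGenEigenspace B μ)
        (Module.End.maxGenEigenspace B 0) := by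
      have hind := Module.End.independent_maxGenEigenspace B
      have := hind μ
      refine this.mono_right ?_
      exact le_iSup_of_le 0 (le_iSup_of_le (Ne.symm hμ) le_rfl)
    exact (Submodule.disjoint_def.mp hdis) (Q v) hQvμ hQv0

end Aux

section GrAux
variable {V : Type*} [AddCommGroup V] [Module ℂ V] (Vf : ℤ → Submodule ℂ V)

lemma grComponent_mk (A : V →ₗ[ℂ] V) (hA : ∀ p : ℤ, ∀ v ∈ Vf p, A v ∈ Vf p) (p : ℤ)
    (v : Vf p) :
    grComponent Vf A hA p (Submodule.Quotient.mk v) =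
      Submodule.Quotient.mk ⟨A v, hA p v v.2⟩ := rfl

lemma grMap_lof (A : V →ₗ[ℂ] V) (hA : ∀ p : ℤ, ∀ v ∈ Vf p, A v ∈ Vf p) (p : ℤ)
    (y : GrC Vf p) :
    grMap Vf A hA (DirectSum.lof ℂ ℤ (fun q => GrC Vf q) p y) =
      DirectSum.lof ℂ ℤ (fun q => GrC Vf q) p (grComponent Vf A hA p y) := by
  simp [grMap]

lemma grMap_comp (A B : V →ₗ[ℂ] V) (hA : ∀ p : ℤ, ∀ v ∈ Vf p, A v ∈ Vf p)
    (hB : ∀ p : ℤ, ∀ v ∈ Vf p, B v ∈ Vf p)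
    (hAB : ∀ p : ℤ, ∀ v ∈ Vf p, (A ∘ₗ B) v ∈ Vf p) :
    grMap Vf (A ∘ₗ B) hAB = grMap Vf A hA ∘ₗ grMap Vf B hB := by
  refine DirectSum.linearMap_ext ℂ fun p => LinearMap.ext fun y =>
    Submodule.Quotient.induction_on _ y fun v => ?_
  simp only [LinearMap.comp_apply, Submodule.mkQ_apply, grMap_lof, grComponent_mk]

lemma grMap_congr (A B : V →ₗ[ℂ] V) (hA : ∀ p : ℤ, ∀ v ∈ Vf p, A v ∈ Vf p)
    (hB : ∀ p : ℤ, ∀ v ∈ Vf p, B v ∈ Vf p) (h : A = B) :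
    grMap Vf A hA = grMap Vf B hB := by subst h; rfl

lemma grMap_zero (h : ∀ p : ℤ, ∀ v ∈ Vf p, (0 : V →ₗ[ℂ] V) v ∈ Vf p) :
    grMap Vf 0 h = 0 := by
  refine DirectSum.linearMap_ext ℂ fun p => LinearMap.ext fun y =>
    Submodule.Quotient.induction_on _ y fun v => ?_
  simp only [LinearMap.comp_apply, Submodule.mkQ_apply, grMap_lof, grComponent_mk,
    LinearMap.zero_apply]
  have h0 : (⟨0, h p v v.2⟩ : Vf p) = 0 := rfl
  rw [h0, Submodule.Quotient.mk_zero, map_zero]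

lemma grMap_one (h : ∀ p : ℤ, ∀ v ∈ Vf p, (1 : V →ₗ[ℂ] V) v ∈ Vf p) :
    grMap Vf 1 h = 1 := by
  refine DirectSum.linearMap_ext ℂ fun p => LinearMap.ext fun y =>
    Submodule.Quotient.induction_on _ y fun v => ?_
  simp only [LinearMap.comp_apply, Submodule.mkQ_apply, grMap_lof, grComponent_mk,
    Module.End.one_apply]

lemma pow_filt (A : V →ₗ[ℂ] V) (hA : ∀ p : ℤ, ∀ v ∈ Vf p, A v ∈ Vf p) (n : ℕ) :
    ∀ p : ℤ, ∀ v ∈ Vf p, (A ^ n) v ∈ Vf p := by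
  induction n with
  | zero => intro p v hv; simpa using hv
  | succ n ih =>
    intro p v hv
    have : (A ^ (n + 1)) v = (A ^ n) (A v) := by rw [pow_succ, Module.End.mul_apply]
    rw [this]
    exact ih p (A v) (hA p v hv)

lemma grMap_pow (A : V →ₗ[ℂ] V) (hA : ∀ p : ℤ, ∀ v ∈ Vf p, A v ∈ Vf p) (n : ℕ)
    (h : ∀ p : ℤ, ∀ v ∈ Vf p, (A ^ n) v ∈ Vf p) :
    grMap Vf (A ^ n) h = (grMap Vf A hA) ^ n := by
  induction n with
  | zero =>
    rw [grMap_congr Vf (A ^ 0) 1 h (by intro p v hv; simpa using hv) (pow_zero A),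
      grMap_one, pow_zero]
  | succ n ih =>
    have hp := pow_filt Vf A hA n
    rw [grMap_congr Vf (A ^ (n + 1)) ((A ^ n) ∘ₗ A) h
        (fun p v hv => hp p (A v) (hA p v hv)) (by rw [pow_succ]; rfl),
      grMap_comp Vf (A ^ n) A hp hA, ih hp, pow_succ]
    rfl

lemma grMap_component (A : V →ₗ[ℂ] V) (hA : ∀ p : ℤ, ∀ v ∈ Vf p, A v ∈ Vf p)
    (x : ⨁ p : ℤ, GrC Vf p) (p : ℤ) :
    grMap Vf A hA x p = grComponent Vf A hA p (x p) := by
  induction x using DirectSum.induction_on with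
  | zero => simp
  | of q y =>
    rw [← DirectSum.lof_eq_of ℂ, grMap_lof]
    by_cases h : q = p
    · subst h
      rw [DirectSum.lof_apply, DirectSum.lof_apply]
    · have h1 : ∀ z : GrC Vf q, (DirectSum.lof ℂ ℤ (fun r => GrC Vf r) q z) p = 0 :=
        fun z => DFinsupp.single_eq_of_ne (Ne.symm h)
      rw [h1, h1, map_zero]
  | add x y hx hy =>
    rw [map_add, DirectSum.add_apply, DirectSum.add_apply, map_add, hx, hy]

lemma grMap_eq_sub (A B : V →ₗ[ℂ] V) (hA : ∀ p : ℤ, ∀ v ∈ Vf p, A v ∈ Vf p)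
    (hB : ∀ p : ℤ, ∀ v ∈ Vf p, B v ∈ Vf p)
    (h : grMap Vf A hA = grMap Vf B hB) (p : ℤ) (v : V) (hv : v ∈ Vf p) :
    A v - B v ∈ Vf (p + 1) := by
  have h2 := congrArg (fun f : (⨁ q : ℤ, GrC Vf q) →ₗ[ℂ] ⨁ q : ℤ, GrC Vf q =>
    f (DirectSum.lof ℂ ℤ (fun q => GrC Vf q) p (Submodule.Quotient.mk ⟨v, hv⟩)) p) h
  simp only [grMap_lof, grComponent_mk, DirectSum.lof_apply] at h2
  rw [Submodule.Quotient.eq] at h2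
  simpa using h2

lemma grMap_pow_lof {M W : Type*} [AddCommGroup M] [Module ℂ M] [AddCommGroup W] [Module ℂ W]
    (f : Module.End ℂ M) (g : Module.End ℂ W) (e : W →ₗ[ℂ] M) (hfe : ∀ z, f (e z) = e (g z))
    (μ : ℂ) (k : ℕ) (y : W) :
    ((f - μ • 1) ^ k) (e y) = e (((g - μ • 1) ^ k) y) := by
  induction k generalizing y with
  | zero => simp
  | succ k ih =>
    rw [pow_succ', pow_succ', Module.End.mul_apply, Module.End.mul_apply]
    have h1 : ∀ z : W, (f - μ • 1) (e z) = e ((g - μ • 1) z) := by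
      intro z
      simp only [LinearMap.sub_apply, LinearMap.smul_apply, Module.End.one_apply, hfe,
        map_sub, map_smul]
    rw [ih, h1]

end GrAux

/-- Let `V` be a finite-dimensional complex vector space with a finite descending
filtration `V = V^a ⊇ ⋯ ⊇ V^b = 0` and let `□ : V → V` be filtration preserving.  Let `P̃` be the
spectral projection of `gr(□)` onto the generalized zero eigenspace and `P` the spectral projection
of `□` onto the generalized zero eigenspace.  Then `P` is filtration preserving with `gr(P) = P̃`,
and `P` is the unique linear map `Q` with: `Q` filtration preserving, `Q∘Q = Q`, `Q∘□ = □∘Q` and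
`gr(Q) = P̃`.  Moreover `V = im(P) ⊕ ker(P)`, `□` is nilpotent on `im(P)` and `□` restricts to a
bijection of `ker(P)`. -/
theorem statement1 {V : Type*} [AddCommGroup V] [Module ℂ V] [FiniteDimensional ℂ V]
    (a b : ℤ) (hab : a ≤ b)
    (Vf : ℤ → Submodule ℂ V) (hanti : Antitone Vf) (htop : Vf a = ⊤) (hbot : Vf b = ⊥)
    (Box : V →ₗ[ℂ] V) (hBox : ∀ p : ℤ, ∀ v ∈ Vf p, Box v ∈ Vf p)
    (Ptil : (⨁ p : ℤ, GrC Vf p) →ₗ[ℂ] ⨁ p : ℤ, GrC Vf p)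
    (hPtil : IsGenZeroProj (V := ⨁ p : ℤ, GrC Vf p) (grMap Vf Box hBox) Ptil)
    (P : V →ₗ[ℂ] V) (hP : IsGenZeroProj Box P) :
    (∃ hPf : ∀ p : ℤ, ∀ v ∈ Vf p, P v ∈ Vf p,
        grMap Vf P hPf = Ptil ∧
        ∀ Q : V →ₗ[ℂ] V, ∀ hQf : ∀ p : ℤ, ∀ v ∈ Vf p, Q v ∈ Vf p,
          Q ∘ₗ Q = Q → Q ∘ₗ Box = Box ∘ₗ Q → grMap Vf Q hQf = Ptil → Q = P) ∧
    P ∘ₗ P = P ∧ P ∘ₗ Box = Box ∘ₗ P ∧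
    IsCompl (LinearMap.range P) (LinearMap.ker P) ∧
    (∃ n : ℕ, ∀ v ∈ LinearMap.range P, (Box ^ n) v = 0) ∧
    (∃ hres : ∀ v ∈ LinearMap.ker P, Box v ∈ LinearMap.ker P,
        Function.Bijective (Box.restrict hres)) := by
  classical
  have hsupV : ⨆ μ, Module.End.maxGenEigenspace Box μ = ⊤ :=
    Module.End.iSup_maxGenEigenspace_eq_top Box
  set W : Submodule ℂ V := ⨆ μ : ℂ, ⨆ _ : μ ≠ 0, Module.End.maxGenEigenspace Box μ with hWdef
  have hEW : ∀ μ : ℂ, μ ≠ 0 → Module.End.maxGenEigenspace Box μ ≤ W := fun μ hμ =>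
    le_iSup_of_le μ (le_iSup_of_le hμ le_rfl)
  have hdisj : Disjoint (Module.End.maxGenEigenspace Box 0) W :=
    Module.End.independent_maxGenEigenspace Box 0
  have hinner : ∀ (μ : ℂ) (x : V), x ∈ (⨆ _ : μ ≠ 0, Module.End.maxGenEigenspace Box μ) →
      x = 0 ∨ (μ ≠ 0 ∧ x ∈ Module.End.maxGenEigenspace Box μ) := by
    intro μ x hx
    rcases eq_or_ne μ 0 with hμ | hμ
    · left
      have hb : (⨆ _ : μ ≠ 0, Module.End.maxGenEigenspace Box μ) = ⊥ := by
        apply iSup_neg; simp [hμ]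
      rw [hb, Submodule.mem_bot] at hx; exact hx
    · right
      exact ⟨hμ, (iSup_le fun _ => le_rfl :
        (⨆ _ : μ ≠ 0, Module.End.maxGenEigenspace Box μ) ≤ _) hx⟩
  have hPmem : ∀ v : V, P v ∈ Module.End.maxGenEigenspace Box 0 ∧ v - P v ∈ W := by
    intro v
    have hv : v ∈ ⨆ μ, Module.End.maxGenEigenspace Box μ := hsupV ▸ Submodule.mem_top
    refine Submodule.iSup_induction
      (motive := fun x => P x ∈ Module.End.maxGenEigenspace Box 0 ∧ x - P x ∈ W) _ hv ?_
      (by simp) ?_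
    · intro μ x hx
      by_cases hμ : μ = 0
      · subst hμ
        rw [hP.1 x hx]
        exact ⟨hx, by rw [sub_self]; exact Submodule.zero_mem W⟩
      · rw [hP.2 μ hμ x hx]
        exact ⟨Submodule.zero_mem _, by rw [sub_zero]; exact hEW μ hμ hx⟩
    · rintro x y ⟨hx1, hx2⟩ ⟨hy1, hy2⟩
      refine ⟨by rw [map_add]; exact Submodule.add_mem _ hx1 hy1, ?_⟩
      have h3 : x + y - P (x + y) = (x - P x) + (y - P y) := by rw [map_add]; abel
      rw [h3]; exact Submodule.add_mem _ hx2 hy2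
  have hPE0 : ∀ v, P v ∈ Module.End.maxGenEigenspace Box 0 := fun v => (hPmem v).1
  have hPW0 : ∀ w ∈ W, P w = 0 := by
    intro w hw
    refine Submodule.iSup_induction (motive := fun x => P x = 0) _ hw ?_ (map_zero P) ?_
    · intro μ x hx
      rcases hinner μ x hx with h | ⟨hμ, hx'⟩
      · rw [h, map_zero]
      · exact hP.2 μ hμ x hx'
    · intro x y hx hy; rw [map_add, hx, hy, add_zero]
  have hPP : P ∘ₗ P = P := by
    ext v
    simp only [LinearMap.comp_apply]
    exact hP.1 (P v) (hPE0 v)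
  have hBoxE0 : ∀ v ∈ Module.End.maxGenEigenspace Box 0,
      Box v ∈ Module.End.maxGenEigenspace Box 0 :=
    fun v hv => Module.End.mapsTo_maxGenEigenspace_of_comm (Commute.refl Box) 0 hv
  have hBoxW : ∀ w ∈ W, Box w ∈ W := by
    intro w hw
    refine Submodule.iSup_induction (motive := fun x => Box x ∈ W) _ hw ?_ (by simp) ?_
    · intro μ x hx
      rcases hinner μ x hx with h | ⟨hμ, hx'⟩
      · rw [h, map_zero]; exact Submodule.zero_mem _
      · exact hEW μ hμ (Module.End.mapsTo_maxGenEigenspace_of_comm (Commute.refl Box) μ hx')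
    · intro x y hx hy; rw [map_add]; exact Submodule.add_mem _ hx hy
  have hcommP : P ∘ₗ Box = Box ∘ₗ P := by
    ext v
    simp only [LinearMap.comp_apply]
    have hsplit : Box v = Box (P v) + Box (v - P v) := by rw [← map_add]; congr 1; abel
    rw [hsplit, map_add, hP.1 _ (hBoxE0 _ (hPE0 v)), hPW0 _ (hBoxW _ (hPmem v).2), add_zero]
  have hrange : LinearMap.range P = Module.End.maxGenEigenspace Box 0 := by
    apply le_antisymm
    · rintro x ⟨v, rfl⟩; exact hPE0 v
    · intro v hv; exact ⟨v, hP.1 v hv⟩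
  have hker : LinearMap.ker P = W := by
    apply le_antisymm
    · intro v hv
      have hv0 : P v = 0 := hv
      have h3 := (hPmem v).2
      rwa [hv0, sub_zero] at h3
    · intro w hw; exact hPW0 w hw
  have hcompl : IsCompl (LinearMap.range P) (LinearMap.ker P) := by
    constructor
    · rw [Submodule.disjoint_def]
      rintro x ⟨v, rfl⟩ hx
      have h1 : P (P v) = P v := hP.1 _ (hPE0 v)
      have hx0 : P (P v) = 0 := LinearMap.mem_ker.mp hx
      rw [← h1]; exact hx0
    · rw [codisjoint_iff, eq_top_iff]
      intro v _
      rw [Submodule.mem_sup]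
      refine ⟨P v, ⟨v, rfl⟩, v - P v, ?_, by abel⟩
      rw [LinearMap.mem_ker, map_sub, hP.1 (P v) (hPE0 v), sub_self]
  set N := Module.finrank ℂ V with hNdef
  have hnilE0 : ∀ v ∈ Module.End.maxGenEigenspace Box 0, (Box ^ N) v = 0 := by
    intro v hv
    rw [Module.End.maxGenEigenspace_eq_genEigenspace_finrank,
      Module.End.mem_genEigenspace_nat] at hv
    simpa using hv
  have hnil : ∃ n : ℕ, ∀ v ∈ LinearMap.range P, (Box ^ n) v = 0 :=
    ⟨N, fun v hv => hnilE0 v (hrange ▸ hv)⟩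
  have hinjW : ∀ w ∈ W, Box w = 0 → w = 0 := by
    intro w hw h0
    have hwE0 : w ∈ Module.End.maxGenEigenspace Box 0 := by
      rw [mem_maxGen_zero_iff]; exact ⟨1, by simpa using h0⟩
    exact (Submodule.disjoint_def.mp hdisj) w hwE0 hw
  have hres : ∀ v ∈ LinearMap.ker P, Box v ∈ LinearMap.ker P := by
    intro v hv
    rw [LinearMap.mem_ker]
    have h1 : P (Box v) = Box (P v) := LinearMap.congr_fun hcommP v
    rw [h1, LinearMap.mem_ker.mp hv, map_zero]
  have hbij : Function.Bijective (Box.restrict hres) := by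
    have hinj : Function.Injective (Box.restrict hres) := by
      refine (injective_iff_map_eq_zero _).mpr ?_
      intro x hx
      have hx0 : Box (x : V) = 0 := by
        have := congrArg Subtype.val hx
        simpa using this
      exact Subtype.ext (hinjW (x : V) (hker ▸ x.2) hx0)
    exact ⟨hinj, (LinearMap.injective_iff_surjective).mp hinj⟩
  -- P preserves the filtration
  have hPf : ∀ p : ℤ, ∀ v ∈ Vf p, P v ∈ Vf p := by
    intro p v hv
    set BU : Vf p →ₗ[ℂ] Vf p := Box.restrict (hBox p) with hBU
    have hcoe : ∀ (μ : ℂ) (k : ℕ) (x : Vf p),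
        (((BU - μ • 1) ^ k) x : V) = ((Box - μ • (1 : V →ₗ[ℂ] V)) ^ k) (x : V) := by
      intro μ k
      induction k with
      | zero => intro x; simp
      | succ k ih =>
        intro x
        rw [pow_succ', pow_succ', Module.End.mul_apply, Module.End.mul_apply]
        have hstep : ∀ z : Vf p, (((BU - μ • 1) z : V)) = (Box - μ • (1 : V →ₗ[ℂ] V)) (z : V) := by
          intro z
          simp [hBU, LinearMap.restrict_coe_apply]
        rw [hstep, ih]
    have hvmem : ∀ u : Vf p, P (u : V) ∈ Vf p := by
      intro u
      have hu : u ∈ ⨆ μ, Module.End.maxGenEigenspace BU μ :=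
        (Module.End.iSup_maxGenEigenspace_eq_top BU) ▸ Submodule.mem_top
      refine Submodule.iSup_induction (motive := fun x : Vf p => P (x : V) ∈ Vf p) _ hu ?_
        (by simp) ?_
      · intro μ x hx
        rw [Module.End.mem_maxGenEigenspace] at hx
        obtain ⟨k, hk⟩ := hx
        have hxV : (x : V) ∈ Module.End.maxGenEigenspace Box μ := by
          rw [Module.End.mem_maxGenEigenspace]
          exact ⟨k, by rw [← hcoe μ k x, hk]; rfl⟩
        rcases eq_or_ne μ 0 with hμ | hμ
        · subst hμ; rw [hP.1 _ hxV]; exact x.2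
        · rw [hP.2 μ hμ _ hxV]; exact (Vf p).zero_mem
      · intro x y hx hy
        rw [Submodule.coe_add, map_add]
        exact (Vf p).add_mem hx hy
    exact hvmem ⟨v, hv⟩
  -- the key lemma
  have keyP : ∀ p : ℤ, ∀ v ∈ Vf p, P v ∈ Vf (p + 1) → Box v ∈ Vf (p + 1) → v ∈ Vf (p + 1) := by
    intro p v hv hPv hBv
    set w := v - P v with hw
    have hwW : w ∈ W := (hPmem v).2
    have hBw : Box w ∈ Vf (p + 1) := by
      rw [hw, map_sub]
      exact Submodule.sub_mem _ hBv (hBox (p + 1) _ hPv)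
    have hBwW : Box w ∈ W := hBoxW w hwW
    have hU'inv : ∀ x ∈ W ⊓ Vf (p + 1), Box x ∈ W ⊓ Vf (p + 1) := by
      intro x hx
      rw [Submodule.mem_inf] at hx ⊢
      exact ⟨hBoxW x hx.1, hBox (p + 1) x hx.2⟩
    set C := Box.restrict hU'inv with hC
    have hCinj : Function.Injective C := by
      refine (injective_iff_map_eq_zero _).mpr ?_
      intro x hx
      have hx0 : Box (x : V) = 0 := by
        have := congrArg Subtype.val hx
        simpa [hC] using this
      exact Subtype.ext (hinjW (x : V) ((Submodule.mem_inf.mp x.2).1) hx0)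
    have hCsurj := (LinearMap.injective_iff_surjective).mp hCinj
    obtain ⟨u, hu⟩ := hCsurj ⟨Box w, Submodule.mem_inf.mpr ⟨hBwW, hBw⟩⟩
    have hu' : Box (u : V) = Box w := by
      have := congrArg Subtype.val hu
      simpa [hC] using this
    have huW : (u : V) ∈ W := (Submodule.mem_inf.mp u.2).1
    have hwu : w = (u : V) := by
      have h0 : Box (w - u) = 0 := by rw [map_sub, hu', sub_self]
      exact sub_eq_zero.mp (hinjW (w - (u : V)) (Submodule.sub_mem _ hwW huW) h0)
    have hv' : v = P v + w := by rw [hw]; abel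
    rw [hv']
    exact Submodule.add_mem _ hPv (hwu ▸ (Submodule.mem_inf.mp u.2).2)
  -- gr(P) = Ptil
  have hBoxPN : (Box ^ N) ∘ₗ P = 0 := by
    ext v
    simp only [LinearMap.comp_apply, LinearMap.zero_apply]
    exact hnilE0 (P v) (hPE0 v)
  have hpfN := pow_filt Vf Box hBox N
  have hgrnil : ((grMap Vf Box hBox) ^ N) ∘ₗ grMap Vf P hPf = 0 := by
    rw [← grMap_pow Vf Box hBox N hpfN,
      ← grMap_comp Vf (Box ^ N) P hpfN hPf (fun p v hv => hpfN p (P v) (hPf p v hv)),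
      grMap_congr Vf ((Box ^ N) ∘ₗ P) 0 _ (fun p v hv => by simp) hBoxPN, grMap_zero]
  have hsupGr : ⨆ μ : ℂ, Module.End.maxGenEigenspace (M := ⨁ p : ℤ, GrC Vf p) (grMap Vf Box hBox) μ = ⊤ := by
    rw [eq_top_iff]
    intro x hx
    clear hx
    induction x using DirectSum.induction_on with
    | zero => exact Submodule.zero_mem _
    | of q y =>
      rw [← DirectSum.lof_eq_of ℂ]
      haveI : FiniteDimensional ℂ (GrC Vf q) := inferInstance
      have hy : y ∈ ⨆ μ, Module.End.maxGenEigenspace (grComponent Vf Box hBox q) μ :=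
        (Module.End.iSup_maxGenEigenspace_eq_top (grComponent Vf Box hBox q)) ▸
          Submodule.mem_top
      refine Submodule.iSup_induction
        (motive := fun z : GrC Vf q => DirectSum.lof ℂ ℤ (fun r => GrC Vf r) q z ∈
          ⨆ μ : ℂ, Module.End.maxGenEigenspace (M := ⨁ p : ℤ, GrC Vf p) (grMap Vf Box hBox) μ) _ hy ?_ (by simp) ?_
      · intro μ z hz
        rw [Module.End.mem_maxGenEigenspace] at hz
        obtain ⟨k, hk⟩ := hz
        refine Submodule.mem_iSup_of_mem μ ?_
        rw [Module.End.mem_maxGenEigenspace]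
        exact ⟨k, by
          have h := grMap_pow_lof (M := ⨁ p : ℤ, GrC Vf p) (grMap Vf Box hBox)
            (grComponent Vf Box hBox q) (DirectSum.lof ℂ ℤ (fun r => GrC Vf r) q)
            (grMap_lof Vf Box hBox q) μ k z
          rw [hk, map_zero] at h
          exact h⟩
      · intro z1 z2 h1 h2
        rw [map_add]; exact Submodule.add_mem _ h1 h2
    | add x y hx hy => exact Submodule.add_mem _ hx hy
  have hgrPproj : IsGenZeroProj (V := ⨁ p : ℤ, GrC Vf p) (grMap Vf Box hBox) (grMap Vf P hPf) := by
    apply isGenZeroProj_of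
    · rw [← grMap_comp Vf P P hPf hPf (fun p v hv => hPf p _ (hPf p v hv))]
      exact grMap_congr Vf _ _ _ _ hPP
    · rw [← grMap_comp Vf P Box hPf hBox (fun p v hv => hPf p _ (hBox p v hv)),
        ← grMap_comp Vf Box P hBox hPf (fun p v hv => hBox p _ (hPf p v hv))]
      exact grMap_congr Vf _ _ _ _ hcommP
    · exact ⟨N, hgrnil⟩
    · intro w h1 h2
      refine DirectSum.ext fun p => ?_
      have h1p : grComponent Vf P hPf p (w p) = 0 := by
        rw [← grMap_component, h1]; rfl
      have h2p : grComponent Vf Box hBox p (w p) = 0 := by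
        rw [← grMap_component, h2]; rfl
      obtain ⟨v, hv⟩ := Submodule.Quotient.mk_surjective _ (w p)
      rw [← hv, grComponent_mk, Submodule.Quotient.mk_eq_zero] at h1p h2p
      have h1p' : P (v : V) ∈ Vf (p + 1) := h1p
      have h2p' : Box (v : V) ∈ Vf (p + 1) := h2p
      have hmem := keyP p (v : V) v.2 h1p' h2p'
      show w p = 0
      rw [← hv, Submodule.Quotient.mk_eq_zero]
      exact hmem
  have hgrP : grMap Vf P hPf = Ptil := genZeroProj_unique hsupGr hgrPproj hPtil
  -- uniqueness
  have huniq : ∀ Q : V →ₗ[ℂ] V, ∀ hQf : ∀ p : ℤ, ∀ v ∈ Vf p, Q v ∈ Vf p,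
      Q ∘ₗ Q = Q → Q ∘ₗ Box = Box ∘ₗ Q → grMap Vf Q hQf = Ptil → Q = P := by
    intro Q hQf hQ2 hQB hgrQ
    have hQBapp : ∀ x, Q (Box x) = Box (Q x) := fun x => LinearMap.congr_fun hQB x
    have hsub : ∀ p : ℤ, ∀ v ∈ Vf p, Q v - P v ∈ Vf (p + 1) := fun p v hv =>
      grMap_eq_sub Vf Q P hQf hPf (hgrQ.trans hgrP.symm) p v hv
    have hinjQ : ∀ w, Q w = 0 → Box w = 0 → w = 0 := by
      intro w hQw hBw
      have hstep : ∀ n : ℕ, w ∈ Vf (a + n) := by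
        intro n
        induction n with
        | zero => simpa using (htop ▸ Submodule.mem_top : w ∈ Vf a)
        | succ n ih =>
          have hPw : P w ∈ Vf (a + n + 1) := by
            have h4 := hsub (a + n) w ih
            rw [hQw, zero_sub] at h4
            simpa using (Vf (a + (n : ℤ) + 1)).neg_mem h4
          have h5 := keyP (a + n) w ih hPw (by rw [hBw]; exact Submodule.zero_mem _)
          have h6 : a + ((n + 1 : ℕ) : ℤ) = a + (n : ℤ) + 1 := by push_cast; ring
          rw [h6]
          exact h5
      have hwb : w ∈ Vf b := by
        have h1 := hstep (b - a).toNat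
        have h2 : a + (((b - a).toNat : ℤ)) = b := by
          rw [Int.toNat_of_nonneg (sub_nonneg.mpr hab)]; ring
        rwa [h2] at h1
      rw [hbot] at hwb
      simpa using hwb
    have hgrnilQ : grMap Vf ((Box ^ N) ∘ₗ Q) (fun p v hv => hpfN p _ (hQf p v hv)) = 0 := by
      rw [grMap_comp Vf (Box ^ N) Q hpfN hQf, hgrQ, ← hgrP,
        ← grMap_comp Vf (Box ^ N) P hpfN hPf (fun p v hv => hpfN p _ (hPf p v hv)),
        grMap_congr Vf ((Box ^ N) ∘ₗ P) 0 _ (fun p v hv => by simp) hBoxPN, grMap_zero]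
    have hshift : ∀ p : ℤ, ∀ v ∈ Vf p, ((Box ^ N) ∘ₗ Q) v ∈ Vf (p + 1) := by
      intro p v hv
      have h7 := grMap_eq_sub Vf ((Box ^ N) ∘ₗ Q) 0 _ (fun p v hv => by simp)
        (by rw [hgrnilQ, grMap_zero]) p v hv
      simpa using h7
    set Cm : V →ₗ[ℂ] V := (Box ^ N) ∘ₗ Q with hCm
    have hiter : ∀ (m : ℕ) (p : ℤ), ∀ v ∈ Vf p, (Cm ^ m) v ∈ Vf (p + m) := by
      intro m
      induction m with
      | zero => intro p v hv; simpa using hv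
      | succ m ih =>
        intro p v hv
        have h1 : (Cm ^ (m + 1)) v = Cm ((Cm ^ m) v) := by
          rw [pow_succ', Module.End.mul_apply]
        rw [h1]
        have h2 := hshift (p + m) _ (ih p v hv)
        have h3 : (p + (m : ℤ)) + 1 = p + ((m + 1 : ℕ) : ℤ) := by push_cast; ring
        rwa [h3] at h2
    set m := (b - a).toNat with hm
    have hCm0 : ∀ v : V, (Cm ^ m) v = 0 := by
      intro v
      have h1 := hiter m a v (htop ▸ Submodule.mem_top)
      have h2 : a + (m : ℤ) = b := by
        rw [hm, Int.toNat_of_nonneg (sub_nonneg.mpr hab)]; ring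
      rw [h2, hbot] at h1
      simpa using h1
    have hnilQ : ∃ n : ℕ, (Box ^ n) ∘ₗ Q = 0 := by
      refine ⟨N * m, ?_⟩
      ext v
      simp only [LinearMap.comp_apply, LinearMap.zero_apply]
      have hfix : Q (Q v) = Q v := by
        have := LinearMap.congr_fun hQ2 v; simpa using this
      have hfixpow : ∀ (j : ℕ) (x : V), Q x = x → (Cm ^ j) x = (Box ^ (N * j)) x := by
        intro j
        induction j with
        | zero => intro x hx; simp
        | succ j ih =>
          intro x hx
          have h1 : (Cm ^ (j + 1)) x = (Cm ^ j) (Cm x) := by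
            rw [pow_succ, Module.End.mul_apply]
          have h2 : Cm x = (Box ^ N) x := by
            rw [hCm]; simp only [LinearMap.comp_apply]; rw [hx]
          have h3 : Q ((Box ^ N) x) = (Box ^ N) x := by
            rw [pow_comm_apply hQBapp N x, hx]
          have h4 : N * j + N = N * (j + 1) := by ring
          rw [h1, h2, ih _ h3, ← Module.End.mul_apply, ← pow_add, h4]
      have h8 := hfixpow m (Q v) hfix
      rw [← h8, hCm0]
    exact genZeroProj_unique hsupV (isGenZeroProj_of hQ2 hQB hnilQ hinjQ) hP
  exact ⟨⟨hPf, hgrP, huniq⟩, hPP, hcommP, hcompl, hnil, ⟨hres, hbij⟩⟩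
end

section
/- Fix positive integer weights w₁,…,w_d and the associated anisotropic dilations δ_λ on ℝ^d. Let s ∈ ℂ and let f : ℝ^d → ℂ be a C^∞ function satisfying f(δ_λ(x)) = λ^s·f(x) for all λ > 0 and all x ∈ ℝ^d. If f is not identically zero, then s is a nonnegative integer and f is a polynomial function all of whose monomials x₁^{α₁}⋯x_d^{α_d} have weighted degree w₁α₁ + ⋯ + w_dα_d equal to s. -/
open Filter Topology MvPolynomial

lemma integral_eval (d : ℕ) (P : MvPolynomial (Fin d) ℂ) (x : Fin d → ℝ) :
    ∫ t in (0:ℝ)..1, MvPolynomial.eval (fun j => ((t * x j : ℝ) : ℂ)) P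
      = MvPolynomial.eval (fun j => (x j : ℂ))
          (∑ m ∈ P.support, MvPolynomial.monomial m (P.coeff m / ((∑ j, m j : ℕ) + 1))) := by
  have hterm : ∀ (t : ℝ) (m : Fin d →₀ ℕ),
      P.coeff m * ∏ j, ((t * x j : ℝ) : ℂ) ^ m j
        = P.coeff m * ((t : ℂ) ^ (∑ j, m j) * ∏ j, ((x j : ℝ) : ℂ) ^ m j) := by
    intro t m
    congr 1
    push_cast
    rw [← Finset.prod_pow_eq_pow_sum, ← Finset.prod_mul_distrib]
    congr 1 with j
    rw [mul_pow]
  have hint : ∀ N : ℕ, (∫ t in (0:ℝ)..1, ((t : ℂ) ^ N)) = 1 / (N + 1) := by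
    intro N
    have : (fun t : ℝ => ((t : ℂ) ^ N)) = fun t : ℝ => (((t ^ N : ℝ) : ℂ)) := by
      push_cast; rfl
    rw [this, intervalIntegral.integral_ofReal, integral_pow]
    push_cast
    norm_num
  calc ∫ t in (0:ℝ)..1, MvPolynomial.eval (fun j => ((t * x j : ℝ) : ℂ)) P
      = ∫ t in (0:ℝ)..1, ∑ m ∈ P.support,
          P.coeff m * ((t : ℂ) ^ (∑ j, m j) * ∏ j, ((x j : ℝ) : ℂ) ^ m j) := by
        apply intervalIntegral.integral_congr
        intro t _
        show MvPolynomial.eval _ P = _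
        rw [eval_eq']
        exact Finset.sum_congr rfl fun m _ => hterm t m
    _ = ∑ m ∈ P.support, ∫ t in (0:ℝ)..1,
          P.coeff m * ((t : ℂ) ^ (∑ j, m j) * ∏ j, ((x j : ℝ) : ℂ) ^ m j) := by
        apply intervalIntegral.integral_finset_sum
        intro m _
        apply Continuous.intervalIntegrable
        continuity
    _ = ∑ m ∈ P.support,
          P.coeff m / ((∑ j, m j : ℕ) + 1) * ∏ j, ((x j : ℝ) : ℂ) ^ m j := by
        refine Finset.sum_congr rfl fun m _ => ?_
        rw [intervalIntegral.integral_const_mul]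
        have : (fun t : ℝ => (t : ℂ) ^ (∑ j, m j) * ∏ j, ((x j : ℝ) : ℂ) ^ m j)
            = fun t : ℝ => ((fun t : ℝ => (t:ℂ) ^ (∑ j, m j)) t) * (∏ j, ((x j : ℝ) : ℂ) ^ m j) := rfl
        rw [this, intervalIntegral.integral_mul_const, hint]
        ring
    _ = MvPolynomial.eval (fun j => (x j : ℂ))
          (∑ m ∈ P.support, MvPolynomial.monomial m (P.coeff m / ((∑ j, m j : ℕ) + 1))) := by
        rw [map_sum]
        refine Finset.sum_congr rfl fun m _ => ?_
        rw [eval_monomial, Finsupp.prod_pow]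

open Filter Topology MvPolynomial

-- the dilation as a continuous linear map
noncomputable def dil (d : ℕ) (w : Fin d → ℕ) (lam : ℝ) :
    (Fin d → ℝ) →L[ℝ] (Fin d → ℝ) :=
  ContinuousLinearMap.pi (fun j => (lam ^ w j : ℝ) • ContinuousLinearMap.proj j)

lemma dil_apply (d : ℕ) (w : Fin d → ℕ) (lam : ℝ) (y : Fin d → ℝ) :
    dil d w lam y = fun j => lam ^ w j * y j := rfl

lemma dil_single (d : ℕ) (w : Fin d → ℕ) (lam : ℝ) (i : Fin d) :
    dil d w lam (Pi.single i (1:ℝ)) = (lam ^ w i : ℝ) • (Pi.single i (1:ℝ) : Fin d → ℝ) := by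
  ext j
  rw [dil_apply]
  rcases eq_or_ne j i with rfl | hj
  · simp
  · simp [Pi.single_apply, hj]

-- homogeneity of directional derivatives
lemma deriv_homog (d : ℕ) (w : Fin d → ℕ) (g : (Fin d → ℝ) → ℂ)
    (hg : Differentiable ℝ g) (n : ℕ)
    (hhom : ∀ lam : ℝ, 0 < lam → ∀ x, g (fun i => lam ^ w i * x i) = (lam : ℂ) ^ n * g x)
    (i : Fin d) (lam : ℝ) (hlam : 0 < lam) (x : Fin d → ℝ) :
    (lam : ℂ) ^ w i * fderiv ℝ g (fun j => lam ^ w j * x j) (Pi.single i 1)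
      = (lam : ℂ) ^ n * fderiv ℝ g x (Pi.single i 1) := by
  have h1 : fderiv ℝ (g ∘ (dil d w lam)) x
      = (fderiv ℝ g (dil d w lam x)).comp (dil d w lam) := by
    rw [fderiv_comp x (hg _) (dil d w lam).differentiableAt,
      (dil d w lam).fderiv]
  have h2 : (g ∘ (dil d w lam)) = fun y => (lam : ℂ) ^ n * g y := by
    funext y
    show g (dil d w lam y) = _
    rw [dil_apply]
    exact hhom lam hlam y
  have h3 : fderiv ℝ (fun y => (lam : ℂ) ^ n * g y) x = ((lam : ℂ) ^ n) • fderiv ℝ g x :=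
    fderiv_const_mul (hg x) _
  have h4 := h1.symm.trans (by rw [h2, h3])
  have h5 := DFunLike.congr_fun h4 (Pi.single i (1:ℝ))
  simp only [ContinuousLinearMap.coe_comp', Function.comp_apply,
    ContinuousLinearMap.smul_apply] at h5
  rw [dil_single, ContinuousLinearMap.map_smul] at h5
  rw [← dil_apply d w lam x]
  rw [smul_eq_mul] at h5
  have : ((lam ^ w i : ℝ) : ℂ) = (lam : ℂ) ^ w i := by push_cast; rfl
  calc (lam : ℂ) ^ w i * fderiv ℝ g (dil d w lam x) (Pi.single i 1)
      = (lam ^ w i : ℝ) • fderiv ℝ g (dil d w lam x) (Pi.single i 1) := by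
        rw [Complex.real_smul, this]
    _ = (lam : ℂ) ^ n * fderiv ℝ g x (Pi.single i 1) := h5

-- limit lemma: positive power of lam times continuous composition tends to 0
lemma tendsto_dil_zero (d : ℕ) (w : Fin d → ℕ) (G : (Fin d → ℝ) → ℂ)
    (hG : Continuous G) (k : ℕ) (hk : 0 < k) (x : Fin d → ℝ) :
    Tendsto (fun lam : ℝ => (lam : ℂ) ^ k * G (fun j => lam ^ w j * x j))
      (𝓝[>] 0) (𝓝 0) := by
  have hc : Continuous (fun lam : ℝ => (lam : ℂ) ^ k * G (fun j => lam ^ w j * x j)) := by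
    apply Continuous.mul
    · exact (Complex.continuous_ofReal.pow k)
    · exact hG.comp (continuous_pi fun j => (continuous_pow (w j)).mul continuous_const)
  have h0 := hc.tendsto 0
  have hz : ((0:ℝ):ℂ) ^ k * G (fun j => (0:ℝ) ^ w j * x j) = 0 := by
    simp [zero_pow hk.ne']
  rw [hz] at h0
  exact h0.mono_left nhdsWithin_le_nhds

lemma homog_poly (d : ℕ) (w : Fin d → ℕ) (hw : ∀ i, 0 < w i) :
    ∀ n : ℕ, ∀ g : (Fin d → ℝ) → ℂ, ContDiff ℝ (⊤ : ℕ∞) g →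
    (∀ lam : ℝ, 0 < lam → ∀ x, g (fun i => lam ^ w i * x i) = (lam : ℂ) ^ n * g x) →
    ∃ P : MvPolynomial (Fin d) ℂ, ∀ x, g x = MvPolynomial.eval (fun i => (x i : ℂ)) P := by
  intro n
  induction n using Nat.strong_induction_on with
  | _ n ih =>
  intro g hg hhom
  set gi : Fin d → (Fin d → ℝ) → ℂ := fun i x => fderiv ℝ g x (Pi.single i 1) with hgidef
  have hgdiff : Differentiable ℝ g := hg.differentiable (by simp)
  have hgi : ∀ i, ContDiff ℝ (⊤ : ℕ∞) (gi i) := by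
    intro i
    exact (hg.fderiv_right (by exact_mod_cast le_top)).clm_apply contDiff_const
  -- each gi is a polynomial
  have hpoly : ∀ i, ∃ P : MvPolynomial (Fin d) ℂ,
      ∀ x, gi i x = MvPolynomial.eval (fun j => (x j : ℂ)) P := by
    intro i
    rcases le_or_gt (w i) n with hwi | hwi
    · -- gi i is homogeneous of degree n - w i
      refine ih (n - w i) (Nat.sub_lt (lt_of_lt_of_le (hw i) hwi) (hw i)) _ (hgi i) ?_
      intro lam hlam x
      have h := deriv_homog d w g hgdiff n hhom i lam hlam x
      have hpow : (lam : ℂ) ^ n = (lam : ℂ) ^ w i * (lam : ℂ) ^ (n - w i) := by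
        rw [← pow_add, Nat.add_sub_cancel' hwi]
      rw [hpow, mul_assoc] at h
      have hne : ((lam : ℂ)) ^ w i ≠ 0 := by
        apply pow_ne_zero
        exact_mod_cast hlam.ne'
      exact mul_left_cancel₀ hne h
    · -- w i > n : gi i vanishes
      refine ⟨0, fun x => ?_⟩
      simp only [map_zero]
      have h := fun lam hlam => deriv_homog d w g hgdiff n hhom i lam hlam x
      -- gi i x = lam ^ (w i - n) * gi i (dil x)
      have key : ∀ lam : ℝ, 0 < lam →
          gi i x = (lam : ℂ) ^ (w i - n) * gi i (fun j => lam ^ w j * x j) := by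
        intro lam hlam
        have hpow : (lam : ℂ) ^ w i = (lam : ℂ) ^ n * (lam : ℂ) ^ (w i - n) := by
          rw [← pow_add, Nat.add_sub_cancel' hwi.le]
        have h' := h lam hlam
        rw [hpow, mul_assoc] at h'
        have hne : ((lam : ℂ)) ^ n ≠ 0 := by
          apply pow_ne_zero
          exact_mod_cast hlam.ne'
        exact (mul_left_cancel₀ hne h').symm
      have hlim := tendsto_dil_zero d w (gi i) (hgi i).continuous (w i - n)
        (Nat.sub_pos_of_lt hwi) x
      have hconst : Tendsto (fun _ : ℝ => gi i x) (𝓝[>] 0) (𝓝 (gi i x)) :=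
        tendsto_const_nhds
      have : Tendsto (fun lam : ℝ => gi i x) (𝓝[>] 0) (𝓝 0) := by
        apply hlim.congr'
        filter_upwards [self_mem_nhdsWithin] with lam hlam
        exact (key lam hlam).symm
      exact tendsto_nhds_unique hconst this
  choose Ps hPs using hpoly
  -- FTC representation
  have hfderiv_apply : ∀ (y x : Fin d → ℝ),
      fderiv ℝ g y x = ∑ i, (x i : ℂ) * gi i y := by
    intro y x
    have hx : (x : Fin d → ℝ) = ∑ i, x i • (Pi.single i (1:ℝ) : Fin d → ℝ) := by
      ext j
      simp [Pi.single_apply]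
    conv_lhs => rw [hx]
    rw [map_sum]
    refine Finset.sum_congr rfl fun i _ => ?_
    rw [ContinuousLinearMap.map_smul, Complex.real_smul]
  have hFTC : ∀ x : Fin d → ℝ,
      g x = g 0 + ∑ i, (x i : ℂ) * ∫ t in (0:ℝ)..1,
        MvPolynomial.eval (fun j => ((t * x j : ℝ) : ℂ)) (Ps i) := by
    intro x
    have hderiv : ∀ t : ℝ, HasDerivAt (fun u : ℝ => g (u • x))
        (∑ i, (x i : ℂ) * gi i (t • x)) t := by
      intro t
      have h1 : HasDerivAt (fun u : ℝ => u • x) x t := by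
        simpa using (hasDerivAt_id t).smul_const x
      have h2 := ((hgdiff (t • x)).hasFDerivAt).comp_hasDerivAt t h1
      rw [hfderiv_apply] at h2
      exact h2
    have hcont : Continuous (fun t : ℝ => ∑ i, (x i : ℂ) * gi i (t • x)) := by
      apply continuous_finset_sum
      intro i _
      exact continuous_const.mul ((hgi i).continuous.comp
        (continuous_id.smul continuous_const))
    have hint := intervalIntegral.integral_eq_sub_of_hasDerivAt
      (fun t _ => hderiv t) (hcont.intervalIntegrable 0 1)
    rw [one_smul, zero_smul] at hint
    have hswap : (∫ t in (0:ℝ)..1, ∑ i, (x i : ℂ) * gi i (t • x))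
        = ∑ i, ∫ t in (0:ℝ)..1, (x i : ℂ) * gi i (t • x) :=
      intervalIntegral.integral_finset_sum (fun i _ =>
        (continuous_const.mul ((hgi i).continuous.comp
          (continuous_id.smul continuous_const))).intervalIntegrable 0 1)
    rw [hswap] at hint
    have heq : ∀ i, (∫ t in (0:ℝ)..1, (x i : ℂ) * gi i (t • x))
        = (x i : ℂ) * ∫ t in (0:ℝ)..1,
            MvPolynomial.eval (fun j => ((t * x j : ℝ) : ℂ)) (Ps i) := by
      intro i
      rw [intervalIntegral.integral_const_mul]
      congr 1
      apply intervalIntegral.integral_congr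
      intro t _
      show gi i (t • x) = _
      rw [hPs i (t • x)]
      rfl
    rw [Finset.sum_congr rfl (fun i _ => heq i)] at hint
    linear_combination -hint
  -- assemble the polynomial
  refine ⟨MvPolynomial.C (g 0) + ∑ i, MvPolynomial.X i *
    (∑ m ∈ (Ps i).support, MvPolynomial.monomial m
      ((Ps i).coeff m / ((∑ j, m j : ℕ) + 1))), fun x => ?_⟩
  rw [map_add, map_sum, MvPolynomial.eval_C]
  rw [hFTC x]
  congr 1
  refine Finset.sum_congr rfl fun i _ => ?_
  rw [map_mul, MvPolynomial.eval_X, integral_eval d (Ps i) x]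

open Filter Topology MvPolynomial

lemma homog_component (d n : ℕ) (w : Fin d → ℕ) (P₀ : MvPolynomial (Fin d) ℂ)
    (hhom : ∀ lam : ℝ, 0 < lam → ∀ x : Fin d → ℝ,
      MvPolynomial.eval (fun i => ((lam ^ w i * x i : ℝ) : ℂ)) P₀
        = (lam : ℂ) ^ n * MvPolynomial.eval (fun i => (x i : ℂ)) P₀) :
    ∃ Pf : MvPolynomial (Fin d) ℂ,
      (∀ x : Fin d → ℝ, MvPolynomial.eval (fun i => (x i : ℂ)) Pf
          = MvPolynomial.eval (fun i => (x i : ℂ)) P₀) ∧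
      ∀ m ∈ Pf.support, ∑ i, w i * m i = n := by
  classical
  set F := P₀.support.filter (fun m => ∑ i, w i * m i = n) with hF
  refine ⟨∑ m ∈ F, MvPolynomial.monomial m (P₀.coeff m), ?_, ?_⟩
  · intro x
    -- polynomials in one variable
    set p : Polynomial ℂ := ∑ m ∈ P₀.support,
      Polynomial.C (P₀.coeff m * ∏ j, ((x j : ℝ) : ℂ) ^ m j) * Polynomial.X ^ (∑ j, w j * m j)
      with hp
    set q : Polynomial ℂ := Polynomial.C (MvPolynomial.eval (fun i => (x i : ℂ)) P₀)
      * Polynomial.X ^ n with hq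
    have hpq : p = q := by
      apply Polynomial.eq_of_infinite_eval_eq
      apply Set.Infinite.mono (s := (fun t : ℝ => (t : ℂ)) '' Set.Ioi 0)
      · rintro z ⟨lam, hlam, rfl⟩
        simp only [Set.mem_setOf_eq, hp, hq, Polynomial.eval_finset_sum, Polynomial.eval_mul,
          Polynomial.eval_C, Polynomial.eval_pow, Polynomial.eval_X]
        have hprod : ∀ m : Fin d →₀ ℕ, (∏ j, ((lam ^ w j * x j : ℝ) : ℂ) ^ m j)
            = (lam : ℂ) ^ (∑ j, w j * m j) * ∏ j, ((x j : ℝ) : ℂ) ^ m j := by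
          intro m
          rw [← Finset.prod_pow_eq_pow_sum, ← Finset.prod_mul_distrib]
          congr 1 with j
          push_cast
          rw [mul_pow, pow_mul]
        calc ∑ m ∈ P₀.support, P₀.coeff m * (∏ j, ((x j : ℝ) : ℂ) ^ m j)
              * (lam : ℂ) ^ (∑ j, w j * m j)
            = ∑ m ∈ P₀.support, P₀.coeff m * ∏ j, ((lam ^ w j * x j : ℝ) : ℂ) ^ m j := by
              refine Finset.sum_congr rfl fun m _ => ?_
              rw [hprod m]; ring
          _ = MvPolynomial.eval (fun i => (x i : ℂ)) P₀ * (lam : ℂ) ^ n := by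
              rw [← eval_eq', hhom lam hlam x]; ring
      · apply Set.Infinite.image
        · exact fun a _ b _ h => Complex.ofReal_injective h
        · exact Set.Ioi_infinite 0
    have hcoeff := congrArg (fun r : Polynomial ℂ => r.coeff n) hpq
    simp only [hp, hq, Polynomial.finset_sum_coeff, Polynomial.coeff_C_mul,
      Polynomial.coeff_X_pow] at hcoeff
    -- hcoeff : ∑ m, a_m * ite (n = ∑ w m) 1 0 = eval P₀ * ite (n = n) 1 0
    rw [if_pos trivial, mul_one] at hcoeff
    rw [map_sum]
    have : ∀ m ∈ F, MvPolynomial.eval (fun i => (x i : ℂ)) (MvPolynomial.monomial m (P₀.coeff m))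
        = P₀.coeff m * ∏ j, ((x j : ℝ) : ℂ) ^ m j := by
      intro m _
      rw [eval_monomial, Finsupp.prod_pow]
    rw [Finset.sum_congr rfl this, hF, Finset.sum_filter]
    rw [← hcoeff]
    refine Finset.sum_congr rfl fun m _ => ?_
    by_cases h : (∑ i, w i * m i) = n
    · rw [if_pos h, if_pos h.symm, mul_one]
    · rw [if_neg h, if_neg (Ne.symm h), mul_zero]
  · intro m' hm'
    rw [MvPolynomial.mem_support_iff] at hm'
    have : (∑ m ∈ F, MvPolynomial.monomial m (P₀.coeff m)).coeff m'
        = if m' ∈ F then P₀.coeff m' else 0 := by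
      rw [MvPolynomial.coeff_sum]
      simp only [MvPolynomial.coeff_monomial]
      exact Finset.sum_ite_eq' F m' _
    rw [this] at hm'
    by_cases h : m' ∈ F
    · exact (Finset.mem_filter.1 h).2
    · rw [if_neg h] at hm'
      exact absurd rfl hm'

open Filter Topology

-- Part 1: s is a nonnegative integer
lemma part1 (d : ℕ) (w : Fin d → ℕ) (hw : ∀ i, 0 < w i)
    (s : ℂ) (f : (Fin d → ℝ) → ℂ) (hf : ContDiff ℝ (⊤ : ℕ∞) f)
    (hhom : ∀ lam : ℝ, 0 < lam → ∀ x : Fin d → ℝ,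
      f (fun i => lam ^ (w i) * x i) = (lam : ℂ) ^ s * f x)
    (hne : f ≠ 0) : ∃ n : ℕ, s = (n : ℂ) := by
  obtain ⟨x₀, hx₀⟩ : ∃ x₀, f x₀ ≠ 0 := by
    by_contra h
    push_neg at h
    exact hne (funext fun x => h x)
  set g : ℝ → ℂ := fun l => f (fun i => l ^ (w i) * x₀ i) with hgdef
  have hg : ContDiff ℝ (⊤ : ℕ∞) g := by
    apply hf.comp
    exact contDiff_pi.2 fun i => (contDiff_id.pow _).mul contDiff_const
  have key : ∀ k : ℕ, ∀ l : ℝ, 0 < l →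
      iteratedDeriv k g l = (∏ j ∈ Finset.range k, (s - j)) * (l : ℂ) ^ (s - k) * f x₀ := by
    intro k
    induction k with
    | zero =>
      intro l hl
      simp only [iteratedDeriv_zero, Finset.range_zero, Finset.prod_empty, one_mul,
        Nat.cast_zero, sub_zero]
      exact hhom l hl x₀
    | succ k ih =>
      intro l hl
      rw [iteratedDeriv_succ]
      have hev : iteratedDeriv k g =ᶠ[𝓝 l]
          fun t => (∏ j ∈ Finset.range k, (s - j)) * (t : ℂ) ^ (s - k) * f x₀ := by
        filter_upwards [Ioi_mem_nhds hl] with t ht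
        exact ih t ht
      rw [hev.deriv_eq]
      have hd : HasDerivAt (fun t : ℝ => (t : ℂ) ^ (s - k))
          ((s - k) * (l : ℂ) ^ (s - k - 1)) l := by
        have := (Complex.hasStrictDerivAt_cpow_const (c := s - k)
          (x := (l : ℂ)) (by simp [Complex.mem_slitPlane_iff, hl])).hasDerivAt
        simpa using this.comp_ofReal
      have := ((hd.const_mul (∏ j ∈ Finset.range k, (s - j))).mul_const (f x₀)).deriv
      rw [this, Finset.prod_range_succ]
      have : s - (k + 1 : ℕ) = s - k - 1 := by push_cast; ring
      rw [this]; ring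
  -- choose K with s.re < K
  set K : ℕ := ⌈s.re⌉₊ + 1 with hK
  have hsK : s.re < K := by
    have := Nat.le_ceil s.re
    push_cast [hK]
    linarith
  by_cases hc : (∏ j ∈ Finset.range K, (s - j)) = 0
  · obtain ⟨j, _, hj⟩ := Finset.prod_eq_zero_iff.1 hc
    exact ⟨j, sub_eq_zero.1 hj⟩
  · exfalso
    set C : ℝ := ‖(∏ j ∈ Finset.range K, (s - j))‖ * ‖f x₀‖ with hC
    have hCpos : 0 < C := by
      exact mul_pos (norm_pos_iff.2 hc) (norm_pos_iff.2 hx₀)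
    have hcont : Continuous (iteratedDeriv K g) := hg.continuous_iteratedDeriv K (by exact_mod_cast le_top)
    have hlim : Tendsto (fun l : ℝ => ‖iteratedDeriv K g l‖) (𝓝[>] 0)
        (𝓝 ‖iteratedDeriv K g 0‖) :=
      ((hcont.norm.tendsto 0).mono_left nhdsWithin_le_nhds)
    have heq : ∀ l : ℝ, 0 < l → ‖iteratedDeriv K g l‖ = C * l ^ (s.re - K) := by
      intro l hl
      rw [key K l hl]
      rw [norm_mul, norm_mul,
        Complex.norm_cpow_eq_rpow_re_of_pos hl]
      simp only [Complex.sub_re, Complex.natCast_re, hC]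
      ring
    -- l ^ (s.re - K) tends to a finite limit along 𝓝[>] 0
    have h2 : Tendsto (fun l : ℝ => l ^ (s.re - K)) (𝓝[>] 0)
        (𝓝 (‖iteratedDeriv K g 0‖ / C)) := by
      have : (fun l : ℝ => l ^ (s.re - K)) =ᶠ[𝓝[>] 0]
          (fun l => ‖iteratedDeriv K g l‖ / C) := by
        filter_upwards [self_mem_nhdsWithin] with l hl
        rw [heq l hl, mul_div_cancel_left₀ _ (ne_of_gt hCpos)]
      exact Tendsto.congr' this.symm (hlim.div_const C)
    -- but it also tends to atTop
    have h1 : Tendsto (fun l : ℝ => l ^ (s.re - K)) (𝓝[>] 0) atTop := by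
      have hKs : 0 < (K : ℝ) - s.re := by linarith
      have := (tendsto_rpow_atTop hKs).comp tendsto_inv_nhdsGT_zero
      apply this.congr'
      filter_upwards [self_mem_nhdsWithin] with l (hl : (0:ℝ) < l)
      show l⁻¹ ^ ((K:ℝ) - s.re) = l ^ (s.re - K)
      rw [Real.inv_rpow hl.le, ← Real.rpow_neg hl.le, neg_sub]
    exact not_tendsto_atTop_of_tendsto_nhds h2 h1

/-- Fix positive integer weights `w₁,…,w_d` with associated anisotropic
dilations `δ_λ(x) = (λ^{w₁}x₁,…,λ^{w_d}x_d)` on `ℝ^d`.  Let `s ∈ ℂ` and let `f : ℝ^d → ℂ` be a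
`C^∞` function with `f(δ_λ(x)) = λ^s·f(x)` for all `λ > 0` and all `x`.  If `f` is not identically
zero, then `s` is a nonnegative integer and `f` is a polynomial function all of whose monomials
have weighted degree equal to `s`. -/
theorem statement10 (d : ℕ) (hd : 0 < d) (w : Fin d → ℕ) (hw : ∀ i, 0 < w i)
    (s : ℂ) (f : (Fin d → ℝ) → ℂ) (hf : ContDiff ℝ (⊤ : ℕ∞) f)
    (hhom : ∀ lam : ℝ, 0 < lam → ∀ x : Fin d → ℝ,
      f (fun i => lam ^ (w i) * x i) = (lam : ℂ) ^ s * f x)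
    (hne : f ≠ 0) :
    ∃ n : ℕ, s = (n : ℂ) ∧
      ∃ Pf : MvPolynomial (Fin d) ℂ,
        (∀ x : Fin d → ℝ, f x = MvPolynomial.eval (fun i => (x i : ℂ)) Pf) ∧
        ∀ m ∈ Pf.support, ∑ i, w i * m i = n := by
  obtain ⟨n, hn⟩ := part1 d w hw s f hf hhom hne
  refine ⟨n, hn, ?_⟩
  have hhom' : ∀ lam : ℝ, 0 < lam → ∀ x : Fin d → ℝ,
      f (fun i => lam ^ (w i) * x i) = (lam : ℂ) ^ n * f x := by
    intro lam hlam x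
    rw [hhom lam hlam x, hn, Complex.cpow_natCast]
  obtain ⟨P₀, hP₀⟩ := homog_poly d w hw n f hf hhom'
  have hP₀hom : ∀ lam : ℝ, 0 < lam → ∀ x : Fin d → ℝ,
      MvPolynomial.eval (fun i => ((lam ^ w i * x i : ℝ) : ℂ)) P₀
        = (lam : ℂ) ^ n * MvPolynomial.eval (fun i => (x i : ℂ)) P₀ := by
    intro lam hlam x
    rw [← hP₀, ← hP₀]
    exact hhom' lam hlam x
  obtain ⟨Pf, hPf, hsupp⟩ := homog_component d n w P₀ hP₀hom
  exact ⟨Pf, fun x => (hP₀ x).trans (hPf x).symm, hsupp⟩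
end

section
/- Let A be an associative algebra (or any multiplicative semigroup), let C ≥ 0 be a constant, and let N, ν : A → [0,∞) be functions such that ν(ab) ≤ ν(a)·ν(b) and N(ab) ≤ C·(N(a)·ν(b) + ν(a)·N(b)) for all a, b ∈ A. Then for every k ∈ A one has limsup_{j→∞} N(k^{2^j})^{1/2^j} ≤ ν(k); in particular liminf_{m→∞} N(k^m)^{1/m} ≤ ν(k). -/
open Filter Topology

/-- Let `A` be an associative multiplicative structure, `C ≥ 0` a constant, and
`N, ν : A → [0,∞)` functions with `ν(ab) ≤ ν(a)ν(b)` and `N(ab) ≤ C(N(a)ν(b) + ν(a)N(b))` for all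
`a, b`.  Then for every `k`, `limsup_{j→∞} N(k^{2^j})^{1/2^j} ≤ ν(k)`; in particular
`liminf_{m→∞} N(k^m)^{1/m} ≤ ν(k)`. -/
theorem statement12 {A : Type*} [Monoid A] (C : ℝ) (hC : 0 ≤ C)
    (N ν : A → ℝ) (hN0 : ∀ a, 0 ≤ N a) (hν0 : ∀ a, 0 ≤ ν a)
    (hν : ∀ a b, ν (a * b) ≤ ν a * ν b)
    (hN : ∀ a b, N (a * b) ≤ C * (N a * ν b + ν a * N b)) (k : A) :
    Filter.limsup (fun j : ℕ => N (k ^ 2 ^ j) ^ (((2 : ℝ) ^ j)⁻¹ : ℝ)) Filter.atTop ≤ ν k ∧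
    Filter.liminf (fun m : ℕ => N (k ^ m) ^ (((m : ℝ))⁻¹ : ℝ)) Filter.atTop ≤ ν k := by
  set b := ν k with hb
  set E := max 1 (2 * C) with hEdef
  set M := max 1 (N k) with hMdef
  have hE1 : (1 : ℝ) ≤ E := le_max_left _ _
  have hE0 : (0 : ℝ) < E := lt_of_lt_of_le one_pos hE1
  have hM1 : (1 : ℝ) ≤ M := le_max_left _ _
  have hM0 : (0 : ℝ) < M := lt_of_lt_of_le one_pos hM1
  have hb0 : 0 ≤ b := hν0 k
  -- submultiplicativity of ν on powers
  have hνpow : ∀ n : ℕ, 1 ≤ n → ν (k ^ n) ≤ b ^ n := by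
    intro n hn
    induction n with
    | zero => omega
    | succ m ih =>
      rcases Nat.lt_or_ge 1 (m + 1) with h1 | h1
      · have hm : 1 ≤ m := by omega
        calc ν (k ^ (m + 1)) = ν (k ^ m * k) := by rw [pow_succ]
          _ ≤ ν (k ^ m) * ν k := hν _ _
          _ ≤ b ^ m * b := mul_le_mul (ih hm) le_rfl hb0 (pow_nonneg hb0 m)
          _ = b ^ (m + 1) := (pow_succ b m).symm
      · have : m = 0 := by omega
        subst this; simpa using le_rfl
  -- main inductive bound
  have key : ∀ j : ℕ, N (k ^ 2 ^ j) ≤ E ^ j * M * b ^ (2 ^ j - 1) := by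
    intro j
    induction j with
    | zero =>
      simp only [pow_zero, pow_one, one_mul, mul_one, Nat.sub_self]
      exact le_max_right 1 (N k)
    | succ j ih =>
      have h2j : 1 ≤ 2 ^ j := Nat.one_le_two_pow
      have hsplit : k ^ 2 ^ (j + 1) = k ^ 2 ^ j * k ^ 2 ^ j := by
        rw [← pow_add]
        congr 1
        omega
      have hνj : ν (k ^ 2 ^ j) ≤ b ^ 2 ^ j := hνpow _ h2j
      have h1 : N (k ^ 2 ^ (j + 1)) ≤ (2 * C) * (N (k ^ 2 ^ j) * ν (k ^ 2 ^ j)) := by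
        rw [hsplit]
        have := hN (k ^ 2 ^ j) (k ^ 2 ^ j)
        nlinarith [this]
      have hNj0 := hN0 (k ^ 2 ^ j)
      have hνj0 := hν0 (k ^ 2 ^ j)
      have h2 : (2 * C) * (N (k ^ 2 ^ j) * ν (k ^ 2 ^ j))
          ≤ E * ((E ^ j * M * b ^ (2 ^ j - 1)) * b ^ (2 ^ j)) := by
        apply mul_le_mul (le_max_right _ _)
        · exact mul_le_mul ih hνj hνj0 (by positivity)
        · positivity
        · exact hE0.le
      have h3 : E * ((E ^ j * M * b ^ (2 ^ j - 1)) * b ^ (2 ^ j))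
          = E ^ (j + 1) * M * b ^ (2 ^ (j + 1) - 1) := by
        have hsub : 2 ^ (j + 1) - 1 = (2 ^ j - 1) + 2 ^ j := by omega
        rw [hsub, pow_add, pow_succ]
        ring
      linarith [h1.trans h2]
  -- exponents
  set e : ℕ → ℝ := fun j => ((2 : ℝ) ^ j)⁻¹ with he
  have he0 : ∀ j, 0 < e j := fun j => by positivity
  -- the comparison sequence
  set B : ℕ → ℝ := fun j => E ^ ((j : ℝ) * e j) * M ^ (e j) * b ^ (1 - e j) with hBdef
  have hxB : ∀ j, N (k ^ 2 ^ j) ^ (e j) ≤ B j := by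
    intro j
    have h2j : 1 ≤ 2 ^ j := Nat.one_le_two_pow
    have h1 : N (k ^ 2 ^ j) ^ e j ≤ (E ^ j * M * b ^ (2 ^ j - 1)) ^ e j :=
      Real.rpow_le_rpow (hN0 _) (key j) (he0 j).le
    refine h1.trans_eq ?_
    have hcast : (((2 ^ j - 1 : ℕ) : ℝ)) = (2 : ℝ) ^ j - 1 := by
      push_cast [h2j]
      ring
    rw [Real.mul_rpow (by positivity) (pow_nonneg hb0 _),
        Real.mul_rpow (by positivity) hM0.le,
        ← Real.rpow_natCast E j, ← Real.rpow_natCast b (2 ^ j - 1),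
        ← Real.rpow_mul hE0.le, ← Real.rpow_mul hb0, hcast]
    have hne : (2 : ℝ) ^ j ≠ 0 := by positivity
    have : ((2 : ℝ) ^ j - 1) * e j = 1 - e j := by
      simp only [he]
      field_simp
    rw [this]
  -- the comparison sequence tends to b
  have te : Tendsto e atTop (𝓝 0) := by
    have := tendsto_pow_atTop_atTop_of_one_lt (one_lt_two (α := ℝ))
    exact tendsto_inv_atTop_zero.comp this
  have tje : Tendsto (fun j : ℕ => (j : ℝ) * e j) atTop (𝓝 0) := by
    have := tendsto_pow_const_div_const_pow_of_one_lt 1 (one_lt_two (α := ℝ))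
    simpa [he, div_eq_mul_inv] using this
  have tB : Tendsto B atTop (𝓝 b) := by
    have t1 : Tendsto (fun j : ℕ => E ^ ((j : ℝ) * e j)) atTop (𝓝 1) := by
      simpa using (tendsto_const_nhds (x := E)).rpow tje (Or.inl hE0.ne')
    have t2 : Tendsto (fun j => M ^ e j) atTop (𝓝 1) := by
      simpa using (tendsto_const_nhds (x := M)).rpow te (Or.inl hM0.ne')
    have t3 : Tendsto (fun j => b ^ (1 - e j)) atTop (𝓝 b) := by
      have h' : Tendsto (fun j => 1 - e j) atTop (𝓝 1) := by
        simpa using tendsto_const_nhds.sub te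
      simpa using (tendsto_const_nhds (x := b)).rpow h' (Or.inr one_pos)
    simpa using (t1.mul t2).mul t3
  -- limsup bound
  have hxnonneg : ∀ j : ℕ, (0 : ℝ) ≤ N (k ^ 2 ^ j) ^ (e j) :=
    fun j => Real.rpow_nonneg (hN0 _) _
  have hbdd : Filter.IsBoundedUnder (· ≥ ·) atTop
      (fun j : ℕ => N (k ^ 2 ^ j) ^ (e j)) :=
    Filter.isBoundedUnder_of ⟨0, fun j => hxnonneg j⟩
  have hcobdd : Filter.IsCoboundedUnder (· ≤ ·) atTop
      (fun j : ℕ => N (k ^ 2 ^ j) ^ (e j)) :=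
    hbdd.isCoboundedUnder_le
  have hlimsup : Filter.limsup (fun j : ℕ => N (k ^ 2 ^ j) ^ (e j)) atTop ≤ b := by
    refine le_of_forall_gt_imp_ge_of_dense fun c hc => ?_
    refine Filter.limsup_le_of_le hcobdd ?_
    filter_upwards [tB.eventually (eventually_lt_nhds hc)] with j hj
    exact (hxB j).trans hj.le
  constructor
  · exact hlimsup
  -- liminf bound
  · refine le_of_forall_gt_imp_ge_of_dense fun c hc => ?_
    have hφ : Tendsto (fun j : ℕ => 2 ^ j) atTop atTop :=
      tendsto_atTop_mono (fun j => (Nat.lt_two_pow_self (n := j)).le) tendsto_id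
    have hev : ∀ᶠ j : ℕ in atTop, N (k ^ 2 ^ j) ^ ((((2 ^ j : ℕ) : ℝ))⁻¹) ≤ c := by
      filter_upwards [tB.eventually (eventually_lt_nhds hc)] with j hj
      have : (((2 ^ j : ℕ) : ℝ))⁻¹ = e j := by push_cast; rfl
      rw [this]
      exact (hxB j).trans hj.le
    have hfreq : ∃ᶠ m : ℕ in atTop, N (k ^ m) ^ (((m : ℝ))⁻¹) ≤ c :=
      hφ.frequently hev.frequently
    exact Filter.liminf_le_of_frequently_le hfreq
      (Filter.isBoundedUnder_of ⟨0, fun m => Real.rpow_nonneg (hN0 _) _⟩)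
end

section
/- Let 𝔤 be the Engel Lie algebra and work with matrices over U(𝔤). Define D₀ as the 2×1 matrix with entries (X₁; X₂); D₁ as the 2×2 matrix with rows (−X₂X₂, X₁X₂ − 2X₃) and (−X₄ − X₁X₁X₂ − X₁X₃, X₁X₁X₁); D₂ as the 2×2 matrix with rows (X₁X₁X₁, −X₃ − X₁X₂) and (3X₄ − 3X₁X₃ + X₁X₁X₂, −X₂X₂); and D₃ as the 1×2 matrix (−X₂, X₁). Then D₁·D₀ = 0, D₂·D₁ = 0 and D₃·D₂ = 0 as matrices over U(𝔤); i.e. these explicit operators form the Bernstein–Gelfand–Gelfand complex associated with the left invariant Engel structure. -/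
section aux
variable {U : Type*} [Ring U] (a b c d : U)

lemma engel_aux
    (hba : b*a = a*b - c) (hca : c*a = a*c - d) (hda : d*a = a*d)
    (hcb : c*b = b*c) (hdb : d*b = b*d) (hdc : d*c = c*d) :
    (-(b*b)*a + (a*b - 2*c)*b = 0) ∧
    ((-d - a*a*b - a*c)*a + (a*a*a)*b = 0) ∧
    ((a*a*a)*(-(b*b)) + (-c - a*b)*(-d - a*a*b - a*c) = 0) ∧
    ((a*a*a)*(a*b - 2*c) + (-c - a*b)*(a*a*a) = 0) ∧
    ((3*d - 3*(a*c) + a*a*b)*(-(b*b)) + (-(b*b))*(-d - a*a*b - a*c) = 0) ∧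
    ((3*d - 3*(a*c) + a*a*b)*(a*b - 2*c) + (-(b*b))*(a*a*a) = 0) ∧
    (-b*(a*a*a) + a*(3*d - 3*(a*c) + a*a*b) = 0) ∧
    (-b*(-c - a*b) + a*(-(b*b)) = 0) := by
  have hba' : ∀ z : U, b*(a*z) = a*(b*z) - c*z := by
    intro z; rw [← mul_assoc, hba, sub_mul, mul_assoc]
  have hca' : ∀ z : U, c*(a*z) = a*(c*z) - d*z := by
    intro z; rw [← mul_assoc, hca, sub_mul, mul_assoc]
  have hda' : ∀ z : U, d*(a*z) = a*(d*z) := by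
    intro z; rw [← mul_assoc, hda, mul_assoc]
  have hcb' : ∀ z : U, c*(b*z) = b*(c*z) := by
    intro z; rw [← mul_assoc, hcb, mul_assoc]
  have hdb' : ∀ z : U, d*(b*z) = b*(d*z) := by
    intro z; rw [← mul_assoc, hdb, mul_assoc]
  have hdc' : ∀ z : U, d*(c*z) = c*(d*z) := by
    intro z; rw [← mul_assoc, hdc, mul_assoc]
  refine ⟨?_, ?_, ?_, ?_, ?_, ?_, ?_, ?_⟩ <;>
  · simp only [two_mul, show (3:U) = 1+1+1 by norm_num, add_mul, one_mul,
      mul_sub, sub_mul, mul_add, neg_mul, mul_neg, mul_assoc, neg_sub, neg_neg]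
    simp only [hba, hca, hda, hcb, hdb, hdc, hba', hca', hda', hcb', hdb', hdc',
      mul_sub, sub_mul, mul_add, add_mul, neg_mul, mul_neg, mul_assoc]
    abel

end aux

/-- Let `𝔤` be the Engel Lie algebra, i.e. the 4-dimensional real Lie algebra
with basis `X₁, X₂, X₃, X₄` whose only nonzero brackets of basis elements are `⁅X₁,X₂⁆ = X₃` and
`⁅X₁,X₃⁆ = X₄`.  Then, with `x i := ι(X i)` in the universal enveloping algebra `U(𝔤)`, the
explicit matrices `D₀, D₁, D₂, D₃` of the BGG complex of the left invariant Engel structure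
satisfy `D₁·D₀ = 0`, `D₂·D₁ = 0`, `D₃·D₂ = 0`. -/
theorem statement13 {L : Type*} [LieRing L] [LieAlgebra ℝ L]
    (X : Module.Basis (Fin 4) ℝ L)
    (h12 : ⁅X 0, X 1⁆ = X 2) (h13 : ⁅X 0, X 2⁆ = X 3)
    (h14 : ⁅X 0, X 3⁆ = 0) (h23 : ⁅X 1, X 2⁆ = 0)
    (h24 : ⁅X 1, X 3⁆ = 0) (h34 : ⁅X 2, X 3⁆ = 0) :
    letI U := UniversalEnvelopingAlgebra ℝ L
    letI x : Fin 4 → U := fun i => UniversalEnvelopingAlgebra.ι ℝ (X i)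
    letI D0 : Matrix (Fin 2) (Fin 1) U := !![x 0; x 1]
    letI D1 : Matrix (Fin 2) (Fin 2) U :=
      !![-(x 1 * x 1), x 0 * x 1 - 2 * x 2;
         -(x 3) - x 0 * x 0 * x 1 - x 0 * x 2, x 0 * x 0 * x 0]
    letI D2 : Matrix (Fin 2) (Fin 2) U :=
      !![x 0 * x 0 * x 0, -(x 2) - x 0 * x 1;
         3 * x 3 - 3 * (x 0 * x 2) + x 0 * x 0 * x 1, -(x 1 * x 1)]
    letI D3 : Matrix (Fin 1) (Fin 2) U := !![-(x 1), x 0]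
    D1 * D0 = 0 ∧ D2 * D1 = 0 ∧ D3 * D2 = 0 := by
  beta_reduce
  set x : Fin 4 → UniversalEnvelopingAlgebra ℝ L := fun i => UniversalEnvelopingAlgebra.ι ℝ (X i) with hx
  have key : ∀ (p q : Fin 4), x p * x q - x q * x p =
      UniversalEnvelopingAlgebra.ι ℝ ⁅X p, X q⁆ := by
    intro p q
    letI := LieRing.ofAssociativeRing (A := UniversalEnvelopingAlgebra ℝ L)
    rw [LieHom.map_lie]
    rfl
  have hba : x 1 * x 0 = x 0 * x 1 - x 2 := by
    have h := key 0 1; rw [h12] at h; rw [show x 2 = (UniversalEnvelopingAlgebra.ι ℝ) (X 2) from rfl, ← h]; abel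
  have hca : x 2 * x 0 = x 0 * x 2 - x 3 := by
    have h := key 0 2; rw [h13] at h; rw [show x 3 = (UniversalEnvelopingAlgebra.ι ℝ) (X 3) from rfl, ← h]; abel
  have hda : x 3 * x 0 = x 0 * x 3 := by
    have h := key 0 3; rw [h14, map_zero] at h; exact (sub_eq_zero.mp h).symm
  have hcb : x 2 * x 1 = x 1 * x 2 := by
    have h := key 1 2; rw [h23, map_zero] at h; exact (sub_eq_zero.mp h).symm
  have hdb : x 3 * x 1 = x 1 * x 3 := by
    have h := key 1 3; rw [h24, map_zero] at h; exact (sub_eq_zero.mp h).symm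
  have hdc : x 3 * x 2 = x 2 * x 3 := by
    have h := key 2 3; rw [h34, map_zero] at h; exact (sub_eq_zero.mp h).symm
  obtain ⟨e1, e2, e3, e4, e5, e6, e7, e8⟩ :=
    engel_aux (x 0) (x 1) (x 2) (x 3) hba hca hda hcb hdb hdc
  refine ⟨?_, ?_, ?_⟩ <;>
  · ext i j
    fin_cases i <;> fin_cases j <;>
      simp only [Matrix.mul_apply, Fin.sum_univ_two, Fin.sum_univ_one,
        Matrix.cons_val', Matrix.cons_val_zero, Matrix.cons_val_one, Matrix.head_cons,
        Matrix.head_fin_const, Matrix.empty_val', Matrix.cons_val_fin_one,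
        Matrix.zero_apply] <;>
      first
        | exact e1 | exact e2 | exact e3 | exact e4 | exact e5 | exact e6 | exact e7 | exact e8
end
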